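/- arXiv:1906.08938 — 2 statements merged into one kernel-verified Lean document; each statement's English description precedes it below -/
import Mathlib

section
/- For γ > 1 and θ ∈ (0,1), there exist q > 0 and an integer L ≥ 1 such that (1 − γ^{−1/(1+q)})^L ≥ θ if and only if 1 − 1/γ > θ. -/
open Real

/-- Feasibility of LPD communication under the Shewhart test: for `γ > 1` and `θ ∈ (0,1)`,
there exist `q > 0` and an integer `L ≥ 1` with `(1 − γ^{−1/(1+q)})^L ≥ θ`
if and only if `1 − 1/γ > θ`. -/
theorem stmt5 (γ θ : ℝ) (hγ : 1 < γ) (hθ : θ ∈ Set.Ioo (0 : ℝ) 1) :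
    (∃ q : ℝ, 0 < q ∧ ∃ L : ℕ, 1 ≤ L ∧ θ ≤ (1 - γ ^ (-(1 / (1 + q)))) ^ L)
      ↔ θ < 1 - 1 / γ := by
  have hγ0 : (0:ℝ) < γ := by linarith
  obtain ⟨hθ0, hθ1⟩ := hθ
  constructor
  · rintro ⟨q, hq, L, hL, hθL⟩
    set s : ℝ := 1 / (1 + q) with hs
    have hs0 : 0 < s := by positivity
    have hs1 : s < 1 := by
      rw [hs, div_lt_one (by linarith)]; linarith
    have h1 : γ ^ (-s) < 1 := Real.rpow_lt_one_of_one_lt_of_neg hγ (by linarith)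
    have h2 : γ ^ (-(1:ℝ)) < γ ^ (-s) :=
      (Real.rpow_lt_rpow_left_iff hγ).mpr (by linarith)
    have h3 : γ ^ (-(1:ℝ)) = 1 / γ := by
      rw [Real.rpow_neg_one]; ring
    have hpos : 0 < γ ^ (-s) := Real.rpow_pos_of_pos hγ0 _
    have ha0 : 0 ≤ 1 - γ ^ (-s) := by linarith
    have := pow_le_of_le_one ha0 (by linarith) (by omega : L ≠ 0)
    have : θ ≤ 1 - γ ^ (-s) := le_trans hθL this
    rw [h3] at h2
    linarith
  · intro h
    have key : ∀ᶠ q in nhdsWithin (0:ℝ) (Set.Ioi 0), γ ^ (-(1 / (1 + q))) < 1 - θ := by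
      have hc : ContinuousAt (fun q : ℝ => γ ^ (-(1 / (1 + q)))) 0 := by
        apply Real.continuousAt_const_rpow (ne_of_gt hγ0) |>.comp
        fun_prop (disch := norm_num)
      have h0 : γ ^ (-(1 / (1 + (0:ℝ)))) = 1 / γ := by
        norm_num [Real.rpow_neg_one]
      have hlt : γ ^ (-(1 / (1 + (0:ℝ)))) < 1 - θ := by rw [h0]; linarith
      have : ∀ᶠ q in nhds (0:ℝ), γ ^ (-(1 / (1 + q))) < 1 - θ :=
        hc.eventually_lt continuousAt_const hlt
      exact this.filter_mono nhdsWithin_le_nhds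
    obtain ⟨q, hq1, hq2⟩ := (key.and (eventually_mem_nhdsWithin)).exists
    refine ⟨q, hq2, 1, le_refl 1, by rw [pow_one]; linarith⟩
end

section
/- Let Q₁^SR(x;q) = 1 − ((1+x)/((1+q)·η_r))^{1/q} for 0 ≤ x < η_r with η_r ≥ 1/q and q > 0. Then Q₁^SR(x;q) equals the probability that one post-change SR update starting from R_ν = x stays below η_r, i.e., P{((1+x)/(1+q))·exp(q·Y/(1+q)) < η_r} with Y ~ Exp(mean 1+q). -/
/-!
Solving the inequality for `Y`, the event is `{Y < t}` with
`t = ((1+q)/q) · log (η_r (1+q) / (1+x))`. The distribution function of `Y` is continuous, so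
`P{Y < t} = P{Y ≤ t} = 1 - exp (-t/(1+q))`, and `exp (-t/(1+q))` is the stated power.
-/

open MeasureTheory Real Filter Topology

theorem measure_lt_eq_ofReal_of_measure_le {Ω : Type*} [MeasurableSpace Ω] {μ : Measure Ω}
    {Y : Ω → ℝ} {F : ℝ → ℝ} {t : ℝ} (hF : ContinuousAt F t)
    (hY : ∀ s, μ {ω | Y ω ≤ s} = ENNReal.ofReal (F s)) :
    μ {ω | Y ω < t} = ENNReal.ofReal (F t) := by
  set u : ℕ → ℝ := fun n => t - 1 / (n + 1)
  have hu_mono : Monotone u := fun m n hmn => by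
    simp only [u]; gcongr
  have hu_lim : Tendsto u atTop (𝓝 t) := by
    simpa [u] using
      (tendsto_const_nhds (x := t)).sub (tendsto_one_div_add_atTop_nhds_zero_nat (𝕜 := ℝ))
  have hunion : {ω | Y ω < t} = ⋃ n, {ω | Y ω ≤ u n} := by
    ext ω
    simp only [Set.mem_ofPred_eq, Set.mem_iUnion, u]
    constructor
    · intro h
      obtain ⟨n, hn⟩ := exists_nat_one_div_lt (sub_pos.2 h)
      exact ⟨n, by linarith⟩
    · rintro ⟨n, hn⟩
      linarith [Nat.one_div_pos_of_nat (α := ℝ) (n := n)]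
  have hsets : Monotone fun n => {ω | Y ω ≤ u n} :=
    fun m n hmn ω (hω : Y ω ≤ u m) => hω.trans (hu_mono hmn)
  have h1 := tendsto_measure_iUnion_atTop (μ := μ) hsets
  rw [← hunion] at h1
  simp only [Function.comp_def, hY] at h1
  exact tendsto_nhds_unique h1
    ((ENNReal.continuous_ofReal.tendsto _).comp (hF.tendsto.comp hu_lim))

theorem mul_exp_mul_lt_iff {b c η y : ℝ} (hb : 0 < b) (hc : 0 < c) (hη : 0 < η) :
    c * exp (b * y) < η ↔ y < log (η / c) / b := by
  rw [← lt_div_iff₀' hc, ← lt_log_iff_exp_lt (div_pos hη hc), lt_div_iff₀ hb, mul_comm]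

theorem exp_neg_log_div_eq_inv_rpow {a q : ℝ} (ha : 0 < a) :
    exp (-(log a / q)) = a⁻¹ ^ (1 / q) := by
  rw [rpow_def_of_pos (inv_pos.2 ha), log_inv]
  ring_nf

theorem stmt16_general {Ω : Type*} [MeasurableSpace Ω] (μ : Measure Ω)
    (Y : Ω → ℝ) (q ηr x : ℝ) (hq : 0 < q) (hηr : 1 / q ≤ ηr) (hx : 0 ≤ x)
    (hY : ∀ t : ℝ, μ {ω | Y ω ≤ t} = ENNReal.ofReal (1 - Real.exp (-(t / (1 + q))))) :
    μ {ω | ((1 + x) / (1 + q)) * Real.exp (q * Y ω / (1 + q)) < ηr}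
      = ENNReal.ofReal (1 - ((1 + x) / ((1 + q) * ηr)) ^ (1 / q)) := by
  have hq1 : 0 < 1 + q := by linarith
  have hηr0 : 0 < ηr := (one_div_pos.2 hq).trans_le hηr
  set c := (1 + x) / (1 + q)
  have hc : 0 < c := by positivity
  set t := log (ηr / c) / (q / (1 + q))
  have hevent : {ω | c * exp (q * Y ω / (1 + q)) < ηr} = {ω | Y ω < t} := by
    ext ω
    simp only [Set.mem_ofPred_eq, mul_div_right_comm q]
    exact mul_exp_mul_lt_iff (by positivity) hc hηr0
  have ht : t / (1 + q) = log (ηr / c) / q := by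
    simp only [t]; field_simp
  have hbase : (ηr / c)⁻¹ = (1 + x) / ((1 + q) * ηr) := by
    simp only [c]; field_simp
  rw [hevent, measure_lt_eq_ofReal_of_measure_le (by fun_prop) hY, ht,
    exp_neg_log_div_eq_inv_rpow (div_pos hηr0 hc), hbase]

/-- One-step conditional covert probability under the SR test: with `Y` exponential of mean
`1+q`, `q > 0`, `η_r ≥ 1/q`, and `0 ≤ x < η_r`, the probability that one post-change SR
update starting from `R_ν = x` stays below `η_r` equals
`Q₁^SR(x;q) = 1 − ((1+x)/((1+q)·η_r))^{1/q}`. -/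
theorem stmt16 {Ω : Type*} [MeasurableSpace Ω] (μ : Measure Ω) [IsProbabilityMeasure μ]
    (Y : Ω → ℝ) (q ηr x : ℝ) (hq : 0 < q) (hηr : 1 / q ≤ ηr) (hx : 0 ≤ x) (hxηr : x < ηr)
    (hY : ∀ t : ℝ, μ {ω | Y ω ≤ t} = ENNReal.ofReal (1 - Real.exp (-(t / (1 + q))))) :
    μ {ω | ((1 + x) / (1 + q)) * Real.exp (q * Y ω / (1 + q)) < ηr}
      = ENNReal.ofReal (1 - ((1 + x) / ((1 + q) * ηr)) ^ (1 / q)) :=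
  stmt16_general μ Y q ηr x hq hηr hx hY
end
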